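/- For the damped Mathieu system ẋ₁ = x₂, ẋ₂ = -x₂ - (2 + sin t)·x₁, the function V(x₁,x₂) = 54.6950·x₁x₂ + 90.2849·x₁² + 50.5376·x₂² satisfies V(x) > 0 and (2·90.2849·x₁ + 54.6950·x₂)·x₂ + (54.6950·x₁ + 2·50.5376·x₂)·(-x₂ - (2+sin t)·x₁) < 0 for all x with 0.01 ≤ x₁² + x₂² ≤ 1 and all t ∈ [0.1, 1]. -/

import Mathlib

/-! Both `V` and its Lie derivative are binary quadratic forms in `x`, hence definite as soon as
their discriminants are negative. For `V` this is a numerical check.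
The Lie derivative is `-(b x₁² + a x₁x₂ + c x₂²)` with `a`, `b`, `c` affine in `s = sin t`;
its discriminant is a concave function of `s`, negative on `[0, 0.85]`, and
`sin t ∈ [0, sin 1] ⊆ [0, 0.85]` for `t ∈ [0.1, 1]`. -/

open Real

theorem quadratic_form_pos {a b c x y : ℝ} (hb : 0 < b) (hdisc : a ^ 2 < 4 * b * c)
    (hxy : 0 < x ^ 2 + y ^ 2) : 0 < b * x ^ 2 + a * (x * y) + c * y ^ 2 := by
  have complete_square : 4 * b * (b * x ^ 2 + a * (x * y) + c * y ^ 2) =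
      (2 * b * x + a * y) ^ 2 + (4 * b * c - a ^ 2) * y ^ 2 := by ring
  rcases eq_or_ne y 0 with rfl | hy
  · simp only [mul_zero, zero_pow two_ne_zero, add_zero] at hxy ⊢
    positivity
  · refine pos_of_mul_pos_right (a := 4 * b) ?_ (by positivity)
    have : 0 < (4 * b * c - a ^ 2) * y ^ 2 := mul_pos (by linarith) (by positivity)
    linarith [sq_nonneg (2 * b * x + a * y)]

theorem sin_one_lt : sin 1 < 0.85 := by
  have h := abs_le.mp (sin_bound (x := 1) (by norm_num))
  norm_num at h
  linarith

theorem sin_le_of_le_one {t : ℝ} (ht₀ : 0 ≤ t) (ht₁ : t ≤ 1) : sin t ≤ 0.85 :=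
  (sin_le_sin_of_le_of_le_pi_div_two (by linarith [pi_pos]) (by linarith [pi_gt_three]) ht₁).trans
    sin_one_lt.le

theorem mathieu_discrim_neg {s : ℝ} (hs₀ : 0 ≤ s) (hs₁ : s ≤ 0.85) :
    (76.2756 + 101.0752 * s) ^ 2 < 4 * (54.6950 * (2 + s)) * 46.3802 := by
  nlinarith [mul_nonneg hs₀ (sub_nonneg.mpr hs₁)]

theorem mathieu_lyapunov_general (x₁ x₂ t : ℝ)
    (h₁ : (0.01 : ℝ) ≤ x₁ ^ 2 + x₂ ^ 2)
    (ht₁ : (0.1 : ℝ) ≤ t) (ht₂ : t ≤ 1) :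
    (54.6950 * (x₁ * x₂) + 90.2849 * x₁ ^ 2 + 50.5376 * x₂ ^ 2 > 0) ∧
    ((2 * 90.2849 * x₁ + 54.6950 * x₂) * x₂ +
      (54.6950 * x₁ + 2 * 50.5376 * x₂) * (-x₂ - (2 + Real.sin t) * x₁) < 0) := by
  have hx : 0 < x₁ ^ 2 + x₂ ^ 2 := by linarith
  set s := sin t
  have hs₀ : 0 ≤ s := sin_nonneg_of_nonneg_of_le_pi (by linarith) (by linarith [pi_gt_three])
  have hs₁ : s ≤ 0.85 := sin_le_of_le_one (by linarith) ht₂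
  have lie_deriv_eq : (2 * 90.2849 * x₁ + 54.6950 * x₂) * x₂ +
      (54.6950 * x₁ + 2 * 50.5376 * x₂) * (-x₂ - (2 + s) * x₁) =
      -(54.6950 * (2 + s) * x₁ ^ 2 + (76.2756 + 101.0752 * s) * (x₁ * x₂) +
        46.3802 * x₂ ^ 2) := by ring
  constructor
  · linarith [quadratic_form_pos (a := 54.6950) (b := 90.2849) (c := 50.5376)
      (by norm_num) (by norm_num) hx]
  · rw [lie_deriv_eq, neg_lt_zero]
    exact quadratic_form_pos (by positivity) (mathieu_discrim_neg hs₀ hs₁) hx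

/-- The synthesized function `V(x) = 54.6950·x₁x₂ + 90.2849·x₁² + 50.5376·x₂²` is a
Lyapunov function for the damped Mathieu system `ẋ₁ = x₂, ẋ₂ = -x₂ - (2 + sin t)·x₁`
on the annulus `0.01 ≤ x₁² + x₂² ≤ 1`, uniformly over `t ∈ [0.1, 1]`. -/
theorem mathieu_lyapunov (x₁ x₂ t : ℝ)
    (h₁ : (0.01 : ℝ) ≤ x₁ ^ 2 + x₂ ^ 2) (h₂ : x₁ ^ 2 + x₂ ^ 2 ≤ 1)
    (ht₁ : (0.1 : ℝ) ≤ t) (ht₂ : t ≤ 1) :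
    (54.6950 * (x₁ * x₂) + 90.2849 * x₁ ^ 2 + 50.5376 * x₂ ^ 2 > 0) ∧
    ((2 * 90.2849 * x₁ + 54.6950 * x₂) * x₂ +
      (54.6950 * x₁ + 2 * 50.5376 * x₂) * (-x₂ - (2 + Real.sin t) * x₁) < 0) :=
  mathieu_lyapunov_general x₁ x₂ t h₁ ht₁ ht₂
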